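/- Let m ≥ 2, r_1,…,r_m ∈ ℝ^n, w_1,…,w_m ∈ ℝ, and define p_j = max_i(r_{ji}+w_i), q_j = min_i(r_{ji}−w_i), λ = max_j(p_j − q_j)/2. Then for any α_1,…,α_n ∈ [0,1], the point x with x_j = α_j(p_j − λ) + (1−α_j)(q_j + λ) satisfies max_{1≤i≤m}(ρ(r_i, x) + w_i) = λ, where ρ is the Chebyshev distance. -/
import Mathlib


/-- Chebyshev (L∞) distance on ℝ^n. -/
noncomputable def cheb {n : ℕ} (hn : 0 < n) (r x : Fin n → ℝ) : ℝ :=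
  Finset.univ.sup' (Finset.univ_nonempty_iff.mpr ⟨⟨0, hn⟩⟩) fun j => |r j - x j|

theorem unconstrained_location_minimizers {n m : ℕ} (hn : 0 < n) (hm : 2 ≤ m)
    (r : Fin m → Fin n → ℝ) (w : Fin m → ℝ) (p q : Fin n → ℝ) (lam : ℝ)
    (hp : ∀ j, p j = Finset.univ.sup' (Finset.univ_nonempty_iff.mpr ⟨⟨0, by omega⟩⟩)
      (fun i => r i j + w i))
    (hq : ∀ j, q j = Finset.univ.inf' (Finset.univ_nonempty_iff.mpr ⟨⟨0, by omega⟩⟩)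
      (fun i => r i j - w i))
    (hlam : lam = Finset.univ.sup' (Finset.univ_nonempty_iff.mpr ⟨⟨0, hn⟩⟩)
      (fun j => (p j - q j) / 2))
    (α : Fin n → ℝ) (hα : ∀ j, α j ∈ Set.Icc (0 : ℝ) 1)
    (x : Fin n → ℝ) (hx : ∀ j, x j = α j * (p j - lam) + (1 - α j) * (q j + lam)) :
    (Finset.univ.sup' (Finset.univ_nonempty_iff.mpr ⟨⟨0, by omega⟩⟩)
      fun i => cheb hn (r i) x + w i) = lam := by
  have hpi : ∀ i j, r i j + w i ≤ p j := by
    intro i j; rw [hp j]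
    exact Finset.le_sup' (fun i => r i j + w i) (Finset.mem_univ i)
  have hqi : ∀ i j, q j ≤ r i j - w i := by
    intro i j; rw [hq j]
    exact Finset.inf'_le (fun i => r i j - w i) (Finset.mem_univ i)
  have hlamge : ∀ j, (p j - q j) / 2 ≤ lam := by
    intro j; rw [hlam]
    exact Finset.le_sup' (fun j => (p j - q j) / 2) (Finset.mem_univ j)
  have hlamw : ∀ i, w i ≤ lam := by
    intro i
    have h1 := hpi i ⟨0, hn⟩
    have h2 := hqi i ⟨0, hn⟩
    have h3 := hlamge ⟨0, hn⟩
    linarith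
  have hxb : ∀ j, p j - lam ≤ x j ∧ x j ≤ q j + lam := by
    intro j
    obtain ⟨h0, h1⟩ := hα j
    have hc := hlamge j
    rw [hx j]
    constructor <;> nlinarith
  apply le_antisymm
  · apply Finset.sup'_le
    intro i _
    have hch : cheb hn (r i) x ≤ lam - w i := by
      apply Finset.sup'_le
      intro j _
      obtain ⟨h1, h2⟩ := hxb j
      have := hpi i j
      have := hqi i j
      rw [abs_le]
      constructor <;> linarith
    linarith
  · obtain ⟨j0, _, hj0⟩ := Finset.exists_mem_eq_sup' (Finset.univ_nonempty_iff.mpr ⟨⟨0, hn⟩⟩)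
      (fun j => (p j - q j) / 2)
    rw [← hlam] at hj0
    obtain ⟨i0, _, hi0⟩ := Finset.exists_mem_eq_sup'
      (Finset.univ_nonempty_iff.mpr ⟨(⟨0, by omega⟩ : Fin m)⟩) (fun i => r i j0 + w i)
    rw [← hp j0] at hi0
    have hx0 : x j0 = p j0 - lam := by
      rw [hx j0]; have : p j0 - lam = q j0 + lam := by linarith
      rw [← this]; ring
    have hkey : lam ≤ cheb hn (r i0) x + w i0 := by
      have hle : |r i0 j0 - x j0| ≤ cheb hn (r i0) x :=
        Finset.le_sup' (fun j => |r i0 j - x j|) (Finset.mem_univ j0)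
    -- |r i0 j0 - x j0| = lam - w i0
      have hval : r i0 j0 - x j0 = lam - w i0 := by
        rw [hx0]; linarith [hi0]
      have : lam - w i0 ≤ |r i0 j0 - x j0| := by rw [hval]; exact le_abs_self _
      linarith
    calc lam ≤ cheb hn (r i0) x + w i0 := hkey
      _ ≤ _ := Finset.le_sup' (fun i => cheb hn (r i) x + w i) (Finset.mem_univ i0)
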